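/- (ℓ1–ℓ0 equivalence for whitened data.) Let A ∈ ℝ^{n×d} with n ≤ d satisfy AAᵀ = I_n, and let y ∈ ℝⁿ contain at least one strictly positive and at least one strictly negative entry. Then the infimum, over all widths m, hidden weights U with ‖u_j‖₂ ≤ 1, and output weights w satisfying (AU)_+ w = y, of ‖w‖₁ equals ‖(y)_+‖₂ + ‖(−y)_+‖₂, and it is attained by the two-neuron network u₁ = Aᵀ(y)_+/‖(y)_+‖₂ with w₁ = ‖(y)_+‖₂ and u₂ = Aᵀ(−y)_+/‖(−y)_+‖₂ with w₂ = −‖(−y)_+‖₂. In particular, this network simultaneously minimizes ‖w‖₀ and ‖w‖₁ among all feasible networks, so the minimum-cardinality and minimum-ℓ1 problems share an optimal solution. -/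
import Mathlib

open Finset Matrix

/-- Euclidean (ℓ2) norm of a finite-dimensional real vector. -/
noncomputable def l2norm {k : ℕ} (x : Fin k → ℝ) : ℝ := Real.sqrt (∑ i, x i ^ 2)

/-- Entrywise ReLU of a vector. -/
def reluV {k : ℕ} (x : Fin k → ℝ) : Fin k → ℝ := fun i => max (x i) 0

/-- Output `(AU)_+ w = ∑_j w_j (A u_j)_+` of a bias-free two-layer ReLU network. -/
noncomputable def bfOut {n d m : ℕ} (A : Matrix (Fin n) (Fin d) ℝ)
    (U : Fin m → Fin d → ℝ) (w : Fin m → ℝ) : Fin n → ℝ :=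
  ∑ j, w j • fun i => max (A.mulVec (U j) i) 0

lemma l2norm_nonneg' {k : ℕ} (x : Fin k → ℝ) : 0 ≤ l2norm x := Real.sqrt_nonneg _

lemma l2norm_sq' {k : ℕ} (x : Fin k → ℝ) : l2norm x ^ 2 = ∑ i, x i ^ 2 := by
  rw [l2norm]; exact Real.sq_sqrt (by positivity)

lemma cs' {k : ℕ} (x z : Fin k → ℝ) : ∑ i, x i * z i ≤ l2norm x * l2norm z :=
  Real.sum_mul_le_sqrt_mul_sqrt _ _ _

lemma l2norm_smul' {k : ℕ} (c : ℝ) (x : Fin k → ℝ) : l2norm (c • x) = |c| * l2norm x := by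
  simp only [l2norm, Pi.smul_apply, smul_eq_mul, mul_pow]
  rw [← Finset.mul_sum, Real.sqrt_mul (sq_nonneg c), Real.sqrt_sq_eq_abs]

lemma key1' {n d : ℕ} (A : Matrix (Fin n) (Fin d) ℝ) (hA : A * Aᵀ = 1) (x : Fin n → ℝ) :
    A.mulVec (Aᵀ.mulVec x) = x := by
  rw [Matrix.mulVec_mulVec, hA, Matrix.one_mulVec]

lemma key2' {n d : ℕ} (A : Matrix (Fin n) (Fin d) ℝ) (hA : A * Aᵀ = 1) (x : Fin n → ℝ) :
    l2norm (Aᵀ.mulVec x) = l2norm x := by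
  unfold l2norm
  congr 1
  have h1 : ∑ i, Aᵀ.mulVec x i ^ 2 = (Aᵀ.mulVec x) ⬝ᵥ (Aᵀ.mulVec x) := by
    simp [dotProduct, sq]
  have h2 : ∑ i, x i ^ 2 = x ⬝ᵥ x := by simp [dotProduct, sq]
  rw [h1, h2, Matrix.dotProduct_mulVec, Matrix.vecMul_transpose, key1' A hA]

lemma key3' {n d : ℕ} (A : Matrix (Fin n) (Fin d) ℝ) (hA : A * Aᵀ = 1) (u : Fin d → ℝ) :
    ∑ i, (A.mulVec u) i ^ 2 ≤ ∑ i, u i ^ 2 := by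
  set v : Fin d → ℝ := Aᵀ.mulVec (A.mulVec u) with hv
  have hvn : ∑ i, v i ^ 2 = ∑ i, (A.mulVec u) i ^ 2 := by
    have := key2' A hA (A.mulVec u)
    have h1 := l2norm_sq' v
    have h2 := l2norm_sq' (A.mulVec u)
    rw [← h1, ← h2, hv, this]
  have hdot : ∑ i, (A.mulVec u) i ^ 2 = ∑ i, v i * u i := by
    have h1 : ∑ i, (A.mulVec u) i ^ 2 = (A.mulVec u) ⬝ᵥ (A.mulVec u) := by
      simp [dotProduct, sq]
    rw [h1, Matrix.dotProduct_mulVec]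
    have : (A.mulVec u) ᵥ* A = v := by rw [hv, Matrix.mulVec_transpose]
    rw [this]; rfl
  have hcs : ∑ i, v i * u i ≤ l2norm v * l2norm u := cs' v u
  have hT : l2norm v ^ 2 = ∑ i, (A.mulVec u) i ^ 2 := by rw [l2norm_sq', hvn]
  have hS : l2norm u ^ 2 = ∑ i, u i ^ 2 := l2norm_sq' u
  have h0v : 0 ≤ l2norm v := l2norm_nonneg' v
  have h0u : 0 ≤ l2norm u := l2norm_nonneg' u
  nlinarith [sq_nonneg (l2norm v - l2norm u)]

/-- ℓ1–ℓ0 equivalence for whitened data: with `AAᵀ = I`, `n ≤ d` and `y` having both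
positive and negative entries, the minimum ℓ1-norm of output weights over interpolating
networks with `‖u_j‖₂ ≤ 1` equals `‖(y)₊‖₂ + ‖(-y)₊‖₂`, attained by the two-neuron
network `u₁ = Aᵀ(y)₊/‖(y)₊‖₂, w₁ = ‖(y)₊‖₂`, `u₂ = Aᵀ(-y)₊/‖(-y)₊‖₂, w₂ = -‖(-y)₊‖₂`,
which simultaneously minimizes `‖w‖₀` and `‖w‖₁` among all feasible networks. -/
theorem stmt13 {n d : ℕ} (hnd : n ≤ d) (A : Matrix (Fin n) (Fin d) ℝ)
    (hA : A * Aᵀ = 1) (y : Fin n → ℝ)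
    (hpos : ∃ i, 0 < y i) (hneg : ∃ i, y i < 0) :
    let p := l2norm (reluV y)
    let q := l2norm (reluV (-y))
    let U : Fin 2 → Fin d → ℝ := ![p⁻¹ • Aᵀ.mulVec (reluV y), q⁻¹ • Aᵀ.mulVec (reluV (-y))]
    let w : Fin 2 → ℝ := ![p, -q]
    sInf {r : ℝ | ∃ (m : ℕ) (U' : Fin m → Fin d → ℝ) (w' : Fin m → ℝ),
        (∀ j, l2norm (U' j) ≤ 1) ∧ bfOut A U' w' = y ∧ r = ∑ j, |w' j|} = p + q ∧
    (∀ j, l2norm (U j) ≤ 1) ∧ bfOut A U w = y ∧ (∑ j, |w j|) = p + q ∧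
    (∀ (m : ℕ) (U' : Fin m → Fin d → ℝ) (w' : Fin m → ℝ),
      (∀ j, l2norm (U' j) ≤ 1) → bfOut A U' w' = y →
      (∑ j, |w j|) ≤ (∑ j, |w' j|) ∧
      (Finset.univ.filter fun j => w j ≠ 0).card ≤
        (Finset.univ.filter fun j => w' j ≠ 0).card) := by
  intro p q U w
  obtain ⟨i₀, hi₀⟩ := hpos
  obtain ⟨i₁, hi₁⟩ := hneg
  -- positivity of p and q
  have hp : 0 < p := by
    rw [show p = l2norm (reluV y) from rfl, l2norm, Real.sqrt_pos]
    apply Finset.sum_pos' (fun i _ => sq_nonneg _)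
    exact ⟨i₀, Finset.mem_univ _, by simp [reluV]; positivity⟩
  have hq : 0 < q := by
    rw [show q = l2norm (reluV (-y)) from rfl, l2norm, Real.sqrt_pos]
    apply Finset.sum_pos' (fun i _ => sq_nonneg _)
    refine ⟨i₁, Finset.mem_univ _, ?_⟩
    have : 0 < -y i₁ := by linarith
    simp [reluV]; positivity
  have hpsq : ∑ i, (max (y i) 0) ^ 2 = p ^ 2 := by
    rw [show p = l2norm (reluV y) from rfl, l2norm_sq']; rfl
  have hqsq : ∑ i, (max (-y i) 0) ^ 2 = q ^ 2 := by
    rw [show q = l2norm (reluV (-y)) from rfl, l2norm_sq']; rfl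
  -- feasibility of the two-neuron network
  have hU0 : U 0 = p⁻¹ • Aᵀ.mulVec (reluV y) := rfl
  have hU1 : U 1 = q⁻¹ • Aᵀ.mulVec (reluV (-y)) := rfl
  have hw0 : w 0 = p := rfl
  have hw1 : w 1 = -q := rfl
  have hnormU : ∀ j, l2norm (U j) ≤ 1 := by
    rw [Fin.forall_fin_two]
    constructor
    · rw [hU0, l2norm_smul', key2' A hA, abs_of_pos (by positivity)]
      rw [inv_mul_cancel₀ hp.ne']
    · rw [hU1, l2norm_smul', key2' A hA, abs_of_pos (by positivity)]
      rw [inv_mul_cancel₀ hq.ne']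
  have hfit : bfOut A U w = y := by
    funext i
    have e0 : A.mulVec (U 0) = p⁻¹ • reluV y := by
      rw [hU0, Matrix.mulVec_smul, key1' A hA]
    have e1 : A.mulVec (U 1) = q⁻¹ • reluV (-y) := by
      rw [hU1, Matrix.mulVec_smul, key1' A hA]
    rw [bfOut, Fin.sum_univ_two]
    simp only [Pi.add_apply, Pi.smul_apply, smul_eq_mul, e0, e1, hw0, hw1]
    have r0 : (0:ℝ) ≤ reluV y i := le_max_right _ _
    have r1 : (0:ℝ) ≤ reluV (-y) i := le_max_right _ _
    rw [max_eq_left (by positivity), max_eq_left (by positivity)]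
    have e2 : p * (p⁻¹ * reluV y i) = reluV y i := by
      rw [← mul_assoc, mul_inv_cancel₀ hp.ne', one_mul]
    have e3 : -q * (q⁻¹ * reluV (-y) i) = -reluV (-y) i := by
      rw [neg_mul, ← mul_assoc, mul_inv_cancel₀ hq.ne', one_mul]
    rw [e2, e3]
    simp only [reluV, Pi.neg_apply]
    rcases le_or_gt (y i) 0 with h | h
    · rw [max_eq_right h, max_eq_left (by linarith)]; ring
    · rw [max_eq_left h.le, max_eq_right (by linarith)]; ring
  have hwsum : (∑ j, |w j|) = p + q := by
    rw [Fin.sum_univ_two, hw0, hw1, abs_of_pos hp, abs_neg, abs_of_pos hq]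
  -- lower bound
  have hlb : ∀ (m : ℕ) (U' : Fin m → Fin d → ℝ) (w' : Fin m → ℝ),
      (∀ j, l2norm (U' j) ≤ 1) → bfOut A U' w' = y → p + q ≤ ∑ j, |w' j| := by
    intro m U' w' hU' hfit'
    set v : Fin n → ℝ := fun i => max (y i) 0 / p - max (-y i) 0 / q with hv
    have hyv : ∑ i, y i * v i = p + q := by
      have : ∀ i, y i * v i = max (y i) 0 ^ 2 / p + max (-y i) 0 ^ 2 / q := by
        intro i
        rcases le_or_gt (y i) 0 with h | h
        · simp only [hv]
          rw [max_eq_right h, max_eq_left (by linarith)]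
          field_simp; ring
        · simp only [hv]
          rw [max_eq_left h.le, max_eq_right (by linarith)]
          field_simp; ring
      rw [Finset.sum_congr rfl (fun i _ => this i), Finset.sum_add_distrib,
        ← Finset.sum_div, ← Finset.sum_div, hpsq, hqsq]
      field_simp
    have hswap : ∑ i, y i * v i
        = ∑ j, w' j * (∑ i, max (A.mulVec (U' j) i) 0 * v i) := by
      have hy : ∀ i, y i = ∑ j, w' j * max (A.mulVec (U' j) i) 0 := by
        intro i
        rw [← hfit', bfOut]
        simp [Finset.sum_apply]
      calc ∑ i, y i * v i
          = ∑ i, ∑ j, w' j * max (A.mulVec (U' j) i) 0 * v i := by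
            refine Finset.sum_congr rfl fun i _ => ?_
            rw [hy i, Finset.sum_mul]
        _ = ∑ j, ∑ i, w' j * max (A.mulVec (U' j) i) 0 * v i := Finset.sum_comm
        _ = ∑ j, w' j * (∑ i, max (A.mulVec (U' j) i) 0 * v i) := by
            refine Finset.sum_congr rfl fun j _ => ?_
            rw [Finset.mul_sum]
            refine Finset.sum_congr rfl fun i _ => by ring
    have hbound : ∀ j, |∑ i, max (A.mulVec (U' j) i) 0 * v i| ≤ 1 := by
      intro j
      set z : Fin n → ℝ := fun i => max (A.mulVec (U' j) i) 0 with hz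
      have hz0 : ∀ i, 0 ≤ z i := fun i => le_max_right _ _
      have hzn : l2norm z ≤ 1 := by
        have h1 : ∑ i, z i ^ 2 ≤ ∑ i, (A.mulVec (U' j)) i ^ 2 := by
          refine Finset.sum_le_sum fun i _ => ?_
          simp only [hz]
          rcases le_or_gt (A.mulVec (U' j) i) 0 with h | h
          · rw [max_eq_right h]; simpa using sq_nonneg _
          · rw [max_eq_left h.le]
        have h2 := key3' A hA (U' j)
        have h3 : ∑ i, (U' j) i ^ 2 = l2norm (U' j) ^ 2 := (l2norm_sq' _).symm
        have h4 : l2norm (U' j) ^ 2 ≤ 1 := by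
          have := hU' j
          nlinarith [l2norm_nonneg' (U' j)]
        rw [show l2norm z = Real.sqrt (∑ i, z i ^ 2) from rfl]
        rw [show (1:ℝ) = Real.sqrt 1 by simp]
        apply Real.sqrt_le_sqrt
        linarith
      have hzp : ∑ i, z i * max (y i) 0 ≤ p := by
        calc ∑ i, z i * max (y i) 0 ≤ l2norm z * l2norm (reluV y) := cs' _ _
          _ ≤ 1 * p := by
              apply mul_le_mul hzn le_rfl (l2norm_nonneg' _) zero_le_one
          _ = p := one_mul p
      have hzq : ∑ i, z i * max (-y i) 0 ≤ q := by
        calc ∑ i, z i * max (-y i) 0 ≤ l2norm z * l2norm (reluV (-y)) := by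
              have := cs' z (reluV (-y))
              simpa [reluV] using this
          _ ≤ 1 * q := by
              apply mul_le_mul hzn le_rfl (l2norm_nonneg' _) zero_le_one
          _ = q := one_mul q
      have hzp0 : 0 ≤ ∑ i, z i * max (y i) 0 :=
        Finset.sum_nonneg fun i _ => mul_nonneg (hz0 i) (le_max_right _ _)
      have hzq0 : 0 ≤ ∑ i, z i * max (-y i) 0 :=
        Finset.sum_nonneg fun i _ => mul_nonneg (hz0 i) (le_max_right _ _)
      have hsplit : ∑ i, z i * v i
          = (∑ i, z i * max (y i) 0) / p - (∑ i, z i * max (-y i) 0) / q := by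
        have hterm : ∀ i, z i * v i
            = z i * max (y i) 0 / p - z i * max (-y i) 0 / q := by
          intro i; simp only [hv]; field_simp
        rw [Finset.sum_congr rfl fun i _ => hterm i, Finset.sum_sub_distrib,
          ← Finset.sum_div, ← Finset.sum_div]
      rw [abs_le, hsplit]
      constructor
      · have : (∑ i, z i * max (-y i) 0) / q ≤ 1 := by
          rw [div_le_one hq]; exact hzq
        have h2 : 0 ≤ (∑ i, z i * max (y i) 0) / p := by positivity
        linarith
      · have : (∑ i, z i * max (y i) 0) / p ≤ 1 := by
          rw [div_le_one hp]; exact hzp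
        have h2 : 0 ≤ (∑ i, z i * max (-y i) 0) / q := by positivity
        linarith
    calc p + q = ∑ j, w' j * (∑ i, max (A.mulVec (U' j) i) 0 * v i) := by
          rw [← hswap, hyv]
      _ ≤ ∑ j, |w' j| := by
          refine Finset.sum_le_sum fun j _ => ?_
          calc w' j * (∑ i, max (A.mulVec (U' j) i) 0 * v i)
              ≤ |w' j * (∑ i, max (A.mulVec (U' j) i) 0 * v i)| := le_abs_self _
            _ = |w' j| * |∑ i, max (A.mulVec (U' j) i) 0 * v i| := abs_mul _ _
            _ ≤ |w' j| * 1 := by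
                exact mul_le_mul_of_nonneg_left (hbound j) (abs_nonneg _)
            _ = |w' j| := mul_one _
  -- cardinality
  have hcard : ∀ (m : ℕ) (U' : Fin m → Fin d → ℝ) (w' : Fin m → ℝ),
      bfOut A U' w' = y →
      (Finset.univ.filter fun j => w j ≠ 0).card ≤
        (Finset.univ.filter fun j => w' j ≠ 0).card := by
    intro m U' w' hfit'
    have hy : ∀ i, y i = ∑ j, w' j * max (A.mulVec (U' j) i) 0 := by
      intro i
      rw [← hfit', bfOut]
      simp [Finset.sum_apply]
    have hjp : ∃ j, 0 < w' j := by
      by_contra h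
      push_neg at h
      have : y i₀ ≤ 0 := by
        rw [hy i₀]
        exact Finset.sum_nonpos fun j _ =>
          mul_nonpos_of_nonpos_of_nonneg (h j) (le_max_right _ _)
      linarith
    have hjn : ∃ j, w' j < 0 := by
      by_contra h
      push_neg at h
      have : 0 ≤ y i₁ := by
        rw [hy i₁]
        exact Finset.sum_nonneg fun j _ =>
          mul_nonneg (h j) (le_max_right _ _)
      linarith
    obtain ⟨jpos, hjpos⟩ := hjp
    obtain ⟨jneg, hjneg⟩ := hjn
    have hleft : (Finset.univ.filter fun j => w j ≠ 0).card = 2 := by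
      have hall : ∀ j : Fin 2, w j ≠ 0 := by
        rw [Fin.forall_fin_two]
        exact ⟨by rw [hw0]; exact hp.ne', by rw [hw1]; exact neg_ne_zero.2 hq.ne'⟩
      rw [Finset.filter_true_of_mem (fun j _ => hall j), Finset.card_univ, Fintype.card_fin]
    rw [hleft]
    have : 1 < (Finset.univ.filter fun j => w' j ≠ 0).card := by
      apply Finset.one_lt_card.2
      exact ⟨jpos, Finset.mem_filter.2 ⟨Finset.mem_univ _, hjpos.ne'⟩,
        jneg, Finset.mem_filter.2 ⟨Finset.mem_univ _, hjneg.ne⟩, by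
          intro hc; rw [hc] at hjpos; linarith⟩
    omega
  -- assemble
  refine ⟨?_, hnormU, hfit, hwsum, ?_⟩
  · have hmem : p + q ∈ {r : ℝ | ∃ (m : ℕ) (U' : Fin m → Fin d → ℝ) (w' : Fin m → ℝ),
        (∀ j, l2norm (U' j) ≤ 1) ∧ bfOut A U' w' = y ∧ r = ∑ j, |w' j|} :=
      ⟨2, U, w, hnormU, hfit, hwsum.symm⟩
    have hlbset : ∀ r ∈ {r : ℝ | ∃ (m : ℕ) (U' : Fin m → Fin d → ℝ) (w' : Fin m → ℝ),
        (∀ j, l2norm (U' j) ≤ 1) ∧ bfOut A U' w' = y ∧ r = ∑ j, |w' j|}, p + q ≤ r := by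
      rintro r ⟨m, U', w', h1, h2, rfl⟩
      exact hlb m U' w' h1 h2
    exact le_antisymm (csInf_le ⟨p + q, hlbset⟩ hmem) (le_csInf ⟨_, hmem⟩ hlbset)
  · intro m U' w' h1 h2
    exact ⟨hwsum ▸ hlb m U' w' h1 h2, hcard m U' w' h2⟩
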